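/- For the system Σ' = C₂(Σ³ - A²Σ) + Σ(-A²λ² + 2w² - 2)/2 + (w-Aλ)(Aλ+w)/C₂ + 2C₂²Σ³/λ², A' = -A³λ²/2 + AC₂(Σ²-A²) + 2AC₂²Σ²/λ² + A(2Σ + w² + 1), w' = w(C₂(λ²(Σ²-A²) + 2C₂Σ² + 2Σ)/λ² - A²λ²/2 + Σ + w² + 1), the point (Σ,A,w) = (-1/2, √C₂/(√2 λ), 0) is an equilibrium whose Jacobian has eigenvalues 1/2 - C₂/λ², (-1 - √(8C₂² + (4C₂-7)λ²)/λ)/2, and (-1 + √(8C₂² + (4C₂-7)λ²)/λ)/2. -/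

import Mathlib

/-!
Since `w` enters the first two components of the vector field only through `w²`, and the third
component is `w` times a function, the Jacobian at any point with `w = 0` is block diagonal: a
`2 × 2` block in `(Σ, A)` and the scalar `∂w'/∂w`. At `Q₁`, where `2 λ² A² = C₂`, the block has
trace `-1` and discriminant `(8C₂² + (4C₂-7)λ²)/λ²`, so its eigenvalues are given by the quadratic
formula, and the scalar is `1/2 - C₂/λ²`.
-/

noncomputable section

/-- The three-dimensional scalar-field system (γ = 2/3 case) in `(Σ, A, w)`,
with parameters `C₂` and `lam` (= λ). -/
def Fsf (C₂ lam : ℝ) : ℝ × ℝ × ℝ → ℝ × ℝ × ℝ := fun p =>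
  let S := p.1; let A := p.2.1; let w := p.2.2
  (C₂ * (S ^ 3 - A ^ 2 * S) + S * (-(A ^ 2 * lam ^ 2) + 2 * w ^ 2 - 2) / 2 +
     (w - A * lam) * (A * lam + w) / C₂ + 2 * C₂ ^ 2 * S ^ 3 / lam ^ 2,
   -(A ^ 3 * lam ^ 2) / 2 + A * C₂ * (S ^ 2 - A ^ 2) +
     2 * A * C₂ ^ 2 * S ^ 2 / lam ^ 2 + A * (2 * S + w ^ 2 + 1),
   w * (C₂ * (lam ^ 2 * (S ^ 2 - A ^ 2) + 2 * C₂ * S ^ 2 + 2 * S) / lam ^ 2 -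
     A ^ 2 * lam ^ 2 / 2 + S + w ^ 2 + 1))

open Module End

section Block

variable {𝕜 : Type*} [Field 𝕜] [TopologicalSpace 𝕜] [IsTopologicalRing 𝕜] {a b c d e μ : 𝕜}

def blockCLM (a b c d e : 𝕜) : (𝕜 × 𝕜 × 𝕜) →L[𝕜] (𝕜 × 𝕜 × 𝕜) :=
  let x := ContinuousLinearMap.fst 𝕜 𝕜 (𝕜 × 𝕜)
  let y := (ContinuousLinearMap.fst 𝕜 𝕜 𝕜).comp (ContinuousLinearMap.snd 𝕜 𝕜 (𝕜 × 𝕜))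
  let z := (ContinuousLinearMap.snd 𝕜 𝕜 𝕜).comp (ContinuousLinearMap.snd 𝕜 𝕜 (𝕜 × 𝕜))
  (a • x + b • y).prod ((c • x + d • y).prod (e • z))

@[simp]
theorem blockCLM_apply (v : 𝕜 × 𝕜 × 𝕜) :
    blockCLM a b c d e v = (a * v.1 + b * v.2.1, c * v.1 + d * v.2.1, e * v.2.2) := by
  simp [blockCLM]

theorem hasEigenvalue_blockCLM_last : HasEigenvalue (blockCLM a b c d e).toLinearMap e :=
  hasEigenvalue_of_hasEigenvector (x := (0, 0, 1)) ⟨mem_eigenspace_iff.mpr (by simp), by simp⟩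

theorem hasEigenvalue_blockCLM_of_char_eq_zero (h : μ ^ 2 - (a + d) * μ + (a * d - b * c) = 0) :
    HasEigenvalue (blockCLM a b c d e).toLinearMap μ := by
  have hM : HasEigenvalue (Matrix.toLin' !![a, b; c, d]) μ := by
    rw [hasEigenvalue_iff_isRoot_charpoly, Matrix.charpoly_toLin', Matrix.charpoly_fin_two]
    simpa [Matrix.trace_fin_two, Matrix.det_fin_two] using h
  obtain ⟨v, hv, hv0⟩ := hM.exists_hasEigenvector
  have hv' := mem_eigenspace_iff.mp hv
  have h0 := congrFun hv' 0
  have h1 := congrFun hv' 1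
  simp only [Matrix.toLin'_apply, Matrix.mulVec, dotProduct, Fin.sum_univ_two, Matrix.of_apply,
    Matrix.cons_val', Matrix.cons_val_fin_one, Matrix.cons_val_zero, Matrix.cons_val_one,
    Pi.smul_apply, smul_eq_mul] at h0 h1
  refine hasEigenvalue_of_hasEigenvector (x := (v 0, v 1, 0)) ⟨mem_eigenspace_iff.mpr ?_, ?_⟩
  · simp only [ContinuousLinearMap.coe_coe, blockCLM_apply, Prod.smul_mk, smul_eq_mul, mul_zero,
      Prod.mk.injEq, and_true]
    exact ⟨h0, h1⟩
  · intro hzero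
    apply hv0
    ext i
    fin_cases i
    exacts [congrArg Prod.fst hzero, congrArg (·.2.1) hzero]

theorem hasEigenvalue_blockCLM_of_discrim [CharZero 𝕜] {t s : 𝕜} (ht : a + d = t)
    (hs : t ^ 2 - 4 * (a * d - b * c) = s ^ 2) :
    HasEigenvalue (blockCLM a b c d e).toLinearMap ((t - s) / 2) ∧
      HasEigenvalue (blockCLM a b c d e).toLinearMap ((t + s) / 2) := by
  subst ht
  constructor <;> apply hasEigenvalue_blockCLM_of_char_eq_zero <;>
    linear_combination (-1 / 4 : 𝕜) * hs

end Block

theorem hasFDerivAt_Fsf_w_zero (C₂ lam S A : ℝ) :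
    HasFDerivAt (Fsf C₂ lam)
      (blockCLM
        (C₂ * (3 * S ^ 2 - A ^ 2) - (A ^ 2 * lam ^ 2 + 2) / 2 + 6 * C₂ ^ 2 * S ^ 2 / lam ^ 2)
        (-(2 * C₂ * A * S) - S * A * lam ^ 2 - 2 * A * lam ^ 2 / C₂)
        (2 * A * C₂ * S + 4 * A * C₂ ^ 2 * S / lam ^ 2 + 2 * A)
        (-(3 * A ^ 2 * lam ^ 2) / 2 + C₂ * (S ^ 2 - 3 * A ^ 2) + 2 * C₂ ^ 2 * S ^ 2 / lam ^ 2 +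
          2 * S + 1)
        (C₂ * (lam ^ 2 * (S ^ 2 - A ^ 2) + 2 * C₂ * S ^ 2 + 2 * S) / lam ^ 2 -
          A ^ 2 * lam ^ 2 / 2 + S + 1))
      (S, A, 0) := by
  have hS : HasFDerivAt (fun p : ℝ × ℝ × ℝ => p.1) (ContinuousLinearMap.fst ℝ ℝ (ℝ × ℝ))
      (S, A, 0) :=
    hasFDerivAt_fst
  have hA : HasFDerivAt (fun p : ℝ × ℝ × ℝ => p.2.1)
      ((ContinuousLinearMap.fst ℝ ℝ ℝ).comp (ContinuousLinearMap.snd ℝ ℝ (ℝ × ℝ))) (S, A, 0) :=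
    hasFDerivAt_fst.comp _ hasFDerivAt_snd
  have hw : HasFDerivAt (fun p : ℝ × ℝ × ℝ => p.2.2)
      ((ContinuousLinearMap.snd ℝ ℝ ℝ).comp (ContinuousLinearMap.snd ℝ ℝ (ℝ × ℝ))) (S, A, 0) :=
    hasFDerivAt_snd.comp _ hasFDerivAt_snd
  have h1 := ((((hS.pow 3).sub ((hA.pow 2).mul hS)).const_mul C₂).add
    ((hS.mul ((((hA.pow 2).mul_const (lam ^ 2)).neg.add ((hw.pow 2).const_mul 2)).sub_const
      2)).mul_const 2⁻¹)).add
    (((hw.sub (hA.mul_const lam)).mul ((hA.mul_const lam).add hw)).mul_const C₂⁻¹) |>.add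
    (((hS.pow 3).const_mul (2 * C₂ ^ 2)).mul_const (lam ^ 2)⁻¹)
  have h2 := (((((hA.pow 3).mul_const (lam ^ 2)).neg.mul_const 2⁻¹).add
    ((hA.mul_const C₂).mul ((hS.pow 2).sub (hA.pow 2)))).add
    ((((hA.const_mul 2).mul_const (C₂ ^ 2)).mul (hS.pow 2)).mul_const (lam ^ 2)⁻¹)).add
    (hA.mul (((hS.const_mul 2).add (hw.pow 2)).add_const 1))
  have h3 := hw.mul (((((((((((hS.pow 2).sub (hA.pow 2)).const_mul (lam ^ 2)).add
    ((hS.pow 2).const_mul (2 * C₂))).add (hS.const_mul 2)).const_mul C₂).mul_const (lam ^ 2)⁻¹).sub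
    (((hA.pow 2).mul_const (lam ^ 2)).mul_const 2⁻¹)).add hS).add (hw.pow 2)).add_const 1)
  refine ((h1.prodMk (h2.prodMk h3)).congr_fderiv ?_).congr_of_eventuallyEq
    (.of_forall fun q => ?_)
  · refine ContinuousLinearMap.ext fun v => ?_
    simp only [blockCLM_apply, ContinuousLinearMap.prod_apply, add_apply, sub_apply, neg_apply,
      smul_apply, ContinuousLinearMap.comp_apply, ContinuousLinearMap.coe_fst',
      ContinuousLinearMap.coe_snd', smul_eq_mul, nsmul_eq_mul, Pi.add_apply, Pi.sub_apply,
      Pi.neg_apply, Prod.mk.injEq]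
    refine ⟨?_, ?_, ?_⟩ <;> ring
  · simp [Fsf, div_eq_mul_inv]

section Q1

variable {C₂ lam A : ℝ}

theorem Fsf_Q1_eq_zero (hC : C₂ ≠ 0) (hlam : lam ≠ 0) (hA : 2 * lam ^ 2 * A ^ 2 = C₂) :
    Fsf C₂ lam (-(1 / 2), A, 0) = 0 := by
  simp only [Fsf, Prod.mk_eq_zero]
  refine ⟨?_, ?_, by ring⟩ <;> field_simp
  · linear_combination (2 * C₂ ^ 2 + C₂ * lam ^ 2 - 4 * lam ^ 2) * hA
  · linear_combination -A * (2 * C₂ + lam ^ 2) * hA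

theorem hasFDerivAt_Fsf_Q1 (hC : C₂ ≠ 0) (hlam : lam ≠ 0) (hA : 2 * lam ^ 2 * A ^ 2 = C₂) :
    HasFDerivAt (Fsf C₂ lam)
      (blockCLM (C₂ / 2 - 1 + C₂ ^ 2 / lam ^ 2) (A * (C₂ + lam ^ 2 / 2 - 2 * lam ^ 2 / C₂))
        (A * (2 - C₂ - 2 * C₂ ^ 2 / lam ^ 2)) (-(C₂ / 2) - C₂ ^ 2 / lam ^ 2) (1 / 2 - C₂ / lam ^ 2))
      (-(1 / 2), A, 0) := by
  convert hasFDerivAt_Fsf_w_zero C₂ lam (-(1 / 2)) A using 2 <;> field_simp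
  · linear_combination (2 * C₂ + lam ^ 2) * hA
  · ring
  · ring
  · linear_combination 3 * (2 * C₂ + lam ^ 2) * hA
  · linear_combination (2 * C₂ + lam ^ 2) * hA

end Q1

/-- The point `Q₁ : (Σ, A, w) = (-1/2, √C₂/(√2 λ), 0)` is an equilibrium of the
γ = 2/3 scalar-field system whose Jacobian has eigenvalues `1/2 - C₂/λ²`,
`(-1 - √(8C₂² + (4C₂-7)λ²)/λ)/2` and `(-1 + √(8C₂² + (4C₂-7)λ²)/λ)/2`. -/
theorem Q1_eigenvalues (C₂ lam : ℝ) (hC : 0 < C₂) (hlam : 0 < lam)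
    (hD : 0 ≤ 8 * C₂ ^ 2 + (4 * C₂ - 7) * lam ^ 2) :
    letI q : ℝ × ℝ × ℝ :=
      (-(1 / 2), Real.sqrt C₂ / (Real.sqrt 2 * lam), 0)
    Fsf C₂ lam q = 0 ∧
    Module.End.HasEigenvalue ((fderiv ℝ (Fsf C₂ lam) q).toLinearMap)
      (1 / 2 - C₂ / lam ^ 2) ∧
    Module.End.HasEigenvalue ((fderiv ℝ (Fsf C₂ lam) q).toLinearMap)
      ((-1 - Real.sqrt (8 * C₂ ^ 2 + (4 * C₂ - 7) * lam ^ 2) / lam) / 2) ∧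
    Module.End.HasEigenvalue ((fderiv ℝ (Fsf C₂ lam) q).toLinearMap)
      ((-1 + Real.sqrt (8 * C₂ ^ 2 + (4 * C₂ - 7) * lam ^ 2) / lam) / 2) := by
  have hA : 2 * lam ^ 2 * (Real.sqrt C₂ / (Real.sqrt 2 * lam)) ^ 2 = C₂ := by
    rw [div_pow, mul_pow, Real.sq_sqrt hC.le, Real.sq_sqrt zero_le_two]
    field_simp
  generalize Real.sqrt C₂ / (Real.sqrt 2 * lam) = A at hA ⊢
  rw [(hasFDerivAt_Fsf_Q1 hC.ne' hlam.ne' hA).fderiv]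
  refine ⟨Fsf_Q1_eq_zero hC.ne' hlam.ne' hA, hasEigenvalue_blockCLM_last,
    hasEigenvalue_blockCLM_of_discrim (by ring) ?_⟩
  rw [div_pow, Real.sq_sqrt hD]
  field_simp
  -- `b * c` is `A²` times the two bracketed factors of `b` and `c`
  linear_combination
    4 * (C₂ * (2 * C₂ + lam ^ 2) - 4 * lam ^ 2) * (lam ^ 2 * (2 - C₂) - 2 * C₂ ^ 2) * hA
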